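/- arXiv:2002.10035 — 2 statements merged into one kernel-verified Lean document; each statement's English description precedes it below -/
import Mathlib

section
/- Let q be a prime power, let d be an even positive integer with d/2 ≤ k, and let k ≤ n1, k ≤ n2, n = n1 + n2. Let 𝒰1 ⊆ F_q^{k×n1} be an SC-representation set of cardinality N1 such that {im(U) : U ∈ 𝒰1} has pairwise subspace distance at least d, and let 𝒞_R ⊆ F_q^{k×n2} be a linear rank-metric code with N_R elements whose every nonzero codeword has rank at least d/2. Let C2 be a set of k-dimensional subspaces of F_q^n with pairwise subspace distance at least d such that for every Y ∈ C2 the projection of Y onto the first n1 coordinates has dimension at most k − d/2. Set C1 = { im(U|M) : U ∈ 𝒰1, M ∈ 𝒞_R }. Then C = C1 ∪ C2 is a set of exactly N1·N_R + |C2| distinct k-dimensional subspaces of F_q^n whose pairwise subspace distance is at least d, i.e. an (n, N1·N_R + |C2|, d, k)_q constant-dimension code. -/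
/-- The subspace distance `d_S(U,W) = 2·dim(U+W) − dim U − dim W` between two
subspaces of an `F`-vector space. -/
noncomputable def subspaceDist {F V : Type*} [Field F] [AddCommGroup V] [Module F V]
    (U W : Submodule F V) : ℕ :=
  2 * Module.finrank F ↥(U ⊔ W) - Module.finrank F ↥U - Module.finrank F ↥W

/-- The row space `im(A)` of a matrix `A`, i.e. the span of its rows. -/
def rowSpace {F : Type*} [Field F] {k n : ℕ} (A : Matrix (Fin k) (Fin n) F) :
    Submodule F (Fin n → F) :=
  Submodule.span F (Set.range fun i : Fin k => A i)

/-- Horizontal concatenation `(U | M)` of two matrices with the same number of rows. -/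
def hcat {F : Type*} [Field F] {k n1 n2 : ℕ} (U : Matrix (Fin k) (Fin n1) F)
    (M : Matrix (Fin k) (Fin n2) F) : Matrix (Fin k) (Fin (n1 + n2)) F :=
  Matrix.of fun i => Fin.append (U i) (M i)

/-- The projection of `F^(n1+n2)` onto the first `n1` coordinates. -/
noncomputable def proj1 (F : Type*) [Field F] (n1 n2 : ℕ) :
    (Fin (n1 + n2) → F) →ₗ[F] (Fin n1 → F) :=
  LinearMap.funLeft F F (Fin.castAdd n2)

/-- Projection onto the last `n2` coordinates. -/
noncomputable def proj2 (F : Type*) [Field F] (n1 n2 : ℕ) :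
    (Fin (n1 + n2) → F) →ₗ[F] (Fin n2 → F) :=
  LinearMap.funLeft F F (Fin.natAdd n1)

open Module Submodule Matrix

section Helpers

variable {F : Type} [Field F] {k n n1 n2 : ℕ}

lemma rowSpace_eq_range (A : Matrix (Fin k) (Fin n) F) :
    rowSpace A = LinearMap.range A.vecMulLinear :=
  (range_vecMulLinear A).symm

lemma mem_rowSpace {A : Matrix (Fin k) (Fin n) F} {v : Fin n → F} :
    v ∈ rowSpace A ↔ ∃ x : Fin k → F, v = x ᵥ* A := by
  rw [rowSpace_eq_range]
  constructor
  · rintro ⟨x, rfl⟩; exact ⟨x, rfl⟩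
  · rintro ⟨x, rfl⟩; exact ⟨x, rfl⟩

lemma finrank_rowSpace (A : Matrix (Fin k) (Fin n) F) :
    finrank F (rowSpace A) = A.rank :=
  (Matrix.rank_eq_finrank_span_row A).symm

lemma proj1_vecMul (U : Matrix (Fin k) (Fin n1) F) (M : Matrix (Fin k) (Fin n2) F)
    (x : Fin k → F) : proj1 F n1 n2 (x ᵥ* hcat U M) = x ᵥ* U := by
  funext j
  simp [proj1, LinearMap.funLeft, Matrix.vecMul, dotProduct, hcat, Fin.append_left]

lemma proj2_vecMul (U : Matrix (Fin k) (Fin n1) F) (M : Matrix (Fin k) (Fin n2) F)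
    (x : Fin k → F) : proj2 F n1 n2 (x ᵥ* hcat U M) = x ᵥ* M := by
  funext j
  simp [proj2, LinearMap.funLeft, Matrix.vecMul, dotProduct, hcat, Fin.append_right]

lemma map_proj1_rowSpace (U : Matrix (Fin k) (Fin n1) F) (M : Matrix (Fin k) (Fin n2) F) :
    (rowSpace (hcat U M)).map (proj1 F n1 n2) = rowSpace U := by
  have hrows : ⇑(proj1 F n1 n2) ∘ (fun i : Fin k => hcat U M i) = fun i => U i := by
    funext i
    funext j
    simp [proj1, LinearMap.funLeft, hcat, Fin.append_left]
  unfold rowSpace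
  rw [Submodule.map_span, ← Set.range_comp, hrows]

lemma ker_vecMulLinear_eq_bot {U : Matrix (Fin k) (Fin n) F} (h : U.rank = k) :
    LinearMap.ker U.vecMulLinear = ⊥ := by
  have h1 := LinearMap.finrank_range_add_finrank_ker U.vecMulLinear
  rw [range_vecMulLinear, ← Matrix.rank_eq_finrank_span_row, h] at h1
  have h2 : finrank F (Fin k → F) = k := by simp
  rw [h2] at h1
  have h3 : finrank F (LinearMap.ker U.vecMulLinear) = 0 := by omega
  exact Submodule.finrank_eq_zero.mp h3

lemma vecMul_injective {U : Matrix (Fin k) (Fin n) F} (h : U.rank = k)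
    {x y : Fin k → F} (hxy : x ᵥ* U = y ᵥ* U) : x = y := by
  have h1 : (x - y) ᵥ* U = 0 := by rw [Matrix.sub_vecMul, hxy, sub_self]
  have h2 : x - y ∈ LinearMap.ker U.vecMulLinear := h1
  rw [ker_vecMulLinear_eq_bot h, Submodule.mem_bot] at h2
  exact sub_eq_zero.mp h2

lemma finrank_rowSpace_hcat {U : Matrix (Fin k) (Fin n1) F} (h : U.rank = k)
    (M : Matrix (Fin k) (Fin n2) F) : finrank F (rowSpace (hcat U M)) = k := by
  rw [rowSpace_eq_range]
  have hinj : Function.Injective (hcat U M).vecMulLinear := by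
    intro x y hxy
    apply vecMul_injective h
    have h2 := congrArg (proj1 F n1 n2) hxy
    simpa [proj1_vecMul] using h2
  rw [LinearMap.finrank_range_of_inj hinj]
  simp

lemma finrank_map_eq_of_disjoint {V W : Type*} [AddCommGroup V] [Module F V]
    [AddCommGroup W] [Module F W] (f : V →ₗ[F] W) (p : Submodule F V)
    [Module.Finite F p] (h : p ⊓ LinearMap.ker f = ⊥) :
    finrank F (p.map f) = finrank F p := by
  have hker : LinearMap.ker (f.comp p.subtype) = ⊥ := by
    rw [eq_bot_iff]
    rintro ⟨x, hx⟩ hxk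
    have hx2 : x ∈ p ⊓ LinearMap.ker f := ⟨hx, by simpa using hxk⟩
    rw [h, Submodule.mem_bot] at hx2
    exact (Submodule.mem_bot F).mpr (Subtype.ext hx2)
  have h1 := LinearMap.finrank_range_add_finrank_ker (f.comp p.subtype)
  rw [hker, LinearMap.range_comp, Submodule.range_subtype] at h1
  simpa using h1

lemma rowSpace_hcat_inf_ker {U : Matrix (Fin k) (Fin n1) F} (h : U.rank = k)
    (M : Matrix (Fin k) (Fin n2) F) :
    rowSpace (hcat U M) ⊓ LinearMap.ker (proj1 F n1 n2) = ⊥ := by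
  rw [eq_bot_iff]
  rintro v ⟨hv1, hv2⟩
  obtain ⟨x, rfl⟩ := mem_rowSpace.mp hv1
  have h1 : x ᵥ* U = 0 := by
    rw [← proj1_vecMul U M x]; exact hv2
  have hx : x = 0 := vecMul_injective h (by rw [h1, Matrix.zero_vecMul])
  subst hx
  simp [Matrix.zero_vecMul]

end Helpers

theorem statement1 (q k n1 n2 d N1 NR : ℕ) (hq : IsPrimePow q)
    (F : Type) [Field F] [Fintype F] (hcard : Fintype.card F = q)
    (hd0 : 0 < d) (hdeven : Even d) (hdk : d / 2 ≤ k) (hkn1 : k ≤ n1) (hkn2 : k ≤ n2)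
    (𝒰 : Set (Matrix (Fin k) (Fin n1) F))
    (hUrank : ∀ U ∈ 𝒰, U.rank = k)
    (hUinj : ∀ U1 ∈ 𝒰, ∀ U2 ∈ 𝒰, U1 ≠ U2 → rowSpace U1 ≠ rowSpace U2)
    (hUcard : 𝒰.ncard = N1)
    (hUcode : ∀ U1 ∈ 𝒰, ∀ U2 ∈ 𝒰, U1 ≠ U2 →
      d ≤ subspaceDist (rowSpace U1) (rowSpace U2))
    (CR : Submodule F (Matrix (Fin k) (Fin n2) F))
    (hCRcard : Nat.card CR = NR)
    (hCRrank : ∀ M ∈ CR, M ≠ 0 → d / 2 ≤ M.rank)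
    (C2 : Set (Submodule F (Fin (n1 + n2) → F)))
    (hC2dim : ∀ Y ∈ C2, Module.finrank F ↥Y = k)
    (hC2dist : ∀ X ∈ C2, ∀ Y ∈ C2, X ≠ Y → d ≤ subspaceDist X Y)
    (hC2proj : ∀ Y ∈ C2, Module.finrank F ↥(Y.map (proj1 F n1 n2)) ≤ k - d / 2) :
    let C1 : Set (Submodule F (Fin (n1 + n2) → F)) :=
      {X | ∃ U ∈ 𝒰, ∃ M ∈ CR, X = rowSpace (hcat U M)}
    let C := C1 ∪ C2
    C.ncard = N1 * NR + C2.ncard ∧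
      (∀ X ∈ C, Module.finrank F ↥X = k) ∧
      (∀ X ∈ C, ∀ Y ∈ C, X ≠ Y → d ≤ subspaceDist X Y) := by
  intro C1 C
  classical
  haveI : Finite (Submodule F (Fin (n1 + n2) → F)) :=
    Finite.of_injective _ SetLike.coe_injective
  obtain ⟨e, he⟩ := hdeven
  -- dimension of C1 members
  have hC1dim : ∀ U ∈ 𝒰, ∀ M : Matrix (Fin k) (Fin n2) F,
      finrank F (rowSpace (hcat U M)) = k :=
    fun U hU M => finrank_rowSpace_hcat (hUrank U hU) M
  have hrowU : ∀ U ∈ 𝒰, finrank F (rowSpace U) = k := fun U hU => by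
    rw [finrank_rowSpace, hUrank U hU]
  -- key sup bound within C1
  have key1 : ∀ U1 ∈ 𝒰, ∀ U2 ∈ 𝒰, ∀ M1 ∈ CR, ∀ M2 ∈ CR, (U1, M1) ≠ (U2, M2) →
      k + d / 2 ≤ finrank F ↥(rowSpace (hcat U1 M1) ⊔ rowSpace (hcat U2 M2)) := by
    intro U1 hU1 U2 hU2 M1 hM1 M2 hM2 hne
    by_cases hU : U1 = U2
    · subst hU
      have hM : M1 ≠ M2 := fun hh => hne (by rw [hh])
      have hUk := hUrank U1 hU1
      have hsub : rowSpace (hcat U1 M1) ⊓ rowSpace (hcat U1 M2) ≤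
          Submodule.map (hcat U1 M1).vecMulLinear
            (LinearMap.ker (M1 - M2).vecMulLinear) := by
        rintro v ⟨h1, h2⟩
        obtain ⟨x, rfl⟩ := mem_rowSpace.mp h1
        obtain ⟨y, hy⟩ := mem_rowSpace.mp h2
        have hxy : x = y := by
          apply vecMul_injective hUk
          have h3 := congrArg (proj1 F n1 n2) hy
          simpa [proj1_vecMul] using h3
        subst hxy
        have hm : x ᵥ* M1 = x ᵥ* M2 := by
          have h3 := congrArg (proj2 F n1 n2) hy
          simpa [proj2_vecMul] using h3
        refine ⟨x, ?_, rfl⟩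
        show x ᵥ* (M1 - M2) = 0
        rw [Matrix.vecMul_sub, hm, sub_self]
      have hinf : finrank F ↥(rowSpace (hcat U1 M1) ⊓ rowSpace (hcat U1 M2)) ≤ k - d / 2 := by
        have h1 : finrank F ↥(rowSpace (hcat U1 M1) ⊓ rowSpace (hcat U1 M2)) ≤
            finrank F ↥(LinearMap.ker (M1 - M2).vecMulLinear) :=
          le_trans (Submodule.finrank_mono hsub) (Submodule.finrank_map_le _ _)
        have h2 := LinearMap.finrank_range_add_finrank_ker (M1 - M2).vecMulLinear
        rw [range_vecMulLinear, ← Matrix.rank_eq_finrank_span_row] at h2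
        have h3 : d / 2 ≤ (M1 - M2).rank :=
          hCRrank _ (sub_mem hM1 hM2) (sub_ne_zero.mpr hM)
        have h4 : finrank F (Fin k → F) = k := by simp
        rw [h4] at h2
        omega
      have hsum := Submodule.finrank_sup_add_finrank_inf_eq
        (rowSpace (hcat U1 M1)) (rowSpace (hcat U1 M2))
      have e1 := hC1dim U1 hU1 M1
      have e2 := hC1dim U1 hU1 M2
      omega
    · have hmap : Submodule.map (proj1 F n1 n2)
          (rowSpace (hcat U1 M1) ⊔ rowSpace (hcat U2 M2)) = rowSpace U1 ⊔ rowSpace U2 := by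
        rw [Submodule.map_sup, map_proj1_rowSpace, map_proj1_rowSpace]
      have h1 : finrank F ↥(rowSpace U1 ⊔ rowSpace U2) ≤
          finrank F ↥(rowSpace (hcat U1 M1) ⊔ rowSpace (hcat U2 M2)) := by
        rw [← hmap]; exact Submodule.finrank_map_le _ _
      have h2 := hUcode U1 hU1 U2 hU2 hU
      unfold subspaceDist at h2
      rw [hrowU U1 hU1, hrowU U2 hU2] at h2
      have h3 : finrank F ↥(rowSpace U1) ≤ finrank F ↥(rowSpace U1 ⊔ rowSpace U2) :=
        Submodule.finrank_mono le_sup_left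
      have h4 := hrowU U1 hU1
      omega
  -- key inf bound between C1 and C2
  have key2 : ∀ U ∈ 𝒰, ∀ Y ∈ C2, ∀ M : Matrix (Fin k) (Fin n2) F,
      finrank F ↥(rowSpace (hcat U M) ⊓ Y) ≤ k - d / 2 := by
    intro U hU Y hY M
    have hUk := hUrank U hU
    have hdisj : (rowSpace (hcat U M) ⊓ Y) ⊓ LinearMap.ker (proj1 F n1 n2) = ⊥ := by
      rw [eq_bot_iff, ← rowSpace_hcat_inf_ker hUk M]
      exact inf_le_inf_right _ inf_le_left
    calc finrank F ↥(rowSpace (hcat U M) ⊓ Y)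
        = finrank F ↥((rowSpace (hcat U M) ⊓ Y).map (proj1 F n1 n2)) :=
          (finrank_map_eq_of_disjoint _ _ hdisj).symm
      _ ≤ finrank F ↥(Y.map (proj1 F n1 n2)) :=
          Submodule.finrank_mono (Submodule.map_mono inf_le_right)
      _ ≤ k - d / 2 := hC2proj Y hY
  -- C1 members are not in C2
  have hnotC2 : ∀ U ∈ 𝒰, ∀ M : Matrix (Fin k) (Fin n2) F, rowSpace (hcat U M) ∉ C2 := by
    intro U hU M hmem
    have h1 := key2 U hU _ hmem M
    rw [inf_idem] at h1
    rw [hC1dim U hU M] at h1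
    omega
  -- description of C1 as an image
  have hC1eq : C1 = (fun p : Matrix (Fin k) (Fin n1) F × Matrix (Fin k) (Fin n2) F =>
      rowSpace (hcat p.1 p.2)) '' (𝒰 ×ˢ (CR : Set (Matrix (Fin k) (Fin n2) F))) := by
    ext X
    constructor
    · rintro ⟨U, hU, M, hM, rfl⟩
      exact ⟨(U, M), ⟨hU, hM⟩, rfl⟩
    · rintro ⟨⟨U, M⟩, ⟨hU, hM⟩, rfl⟩
      exact ⟨U, hU, M, hM, rfl⟩
  -- injectivity on the product
  have hinjOn : Set.InjOn (fun p : Matrix (Fin k) (Fin n1) F × Matrix (Fin k) (Fin n2) F =>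
      rowSpace (hcat p.1 p.2)) (𝒰 ×ˢ (CR : Set (Matrix (Fin k) (Fin n2) F))) := by
    rintro ⟨U1, M1⟩ ⟨hU1, hM1⟩ ⟨U2, M2⟩ ⟨hU2, hM2⟩ heq
    by_contra hne
    have h1 := key1 U1 hU1 U2 hU2 M1 hM1 M2 hM2 hne
    have heq' : rowSpace (hcat U1 M1) = rowSpace (hcat U2 M2) := heq
    rw [heq', sup_idem, hC1dim U2 hU2 M2] at h1
    omega
  -- cardinality of C1
  have hprod : (𝒰 ×ˢ (CR : Set (Matrix (Fin k) (Fin n2) F))).ncard = N1 * NR := by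
    rw [← Nat.card_coe_set_eq, Nat.card_congr (Equiv.Set.prod _ _), Nat.card_prod,
      Nat.card_coe_set_eq, hUcard]
    have h5 : Nat.card ↥(CR : Set (Matrix (Fin k) (Fin n2) F)) = NR := hCRcard
    rw [h5]
  have hC1card : C1.ncard = N1 * NR := by
    rw [hC1eq, Set.ncard_image_of_injOn hinjOn, hprod]
  have hdisjC : Disjoint C1 C2 := by
    rw [Set.disjoint_left]
    rintro X ⟨U, hU, M, hM, rfl⟩ hX2
    exact hnotC2 U hU M hX2
  refine ⟨?_, ?_, ?_⟩
  · show (C1 ∪ C2).ncard = N1 * NR + C2.ncard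
    rw [Set.ncard_union_eq hdisjC (Set.toFinite _) (Set.toFinite _), hC1card]
  · rintro X (⟨U, hU, M, hM, rfl⟩ | hX2)
    · exact hC1dim U hU M
    · exact hC2dim X hX2
  · rintro X (⟨U1, hU1, M1, hM1, rfl⟩ | hX2) Y (⟨U2, hU2, M2, hM2, rfl⟩ | hY2) hne
    · -- both in C1
      have hne' : (U1, M1) ≠ (U2, M2) := by
        rintro heq
        exact hne (by rw [Prod.mk.injEq] at heq; rw [heq.1, heq.2])
      have h1 := key1 U1 hU1 U2 hU2 M1 hM1 M2 hM2 hne'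
      unfold subspaceDist
      rw [hC1dim U1 hU1 M1, hC1dim U2 hU2 M2]
      omega
    · -- C1 vs C2
      have h1 := key2 U1 hU1 Y hY2 M1
      have hsum := Submodule.finrank_sup_add_finrank_inf_eq (rowSpace (hcat U1 M1)) Y
      unfold subspaceDist
      rw [hC1dim U1 hU1 M1] at hsum ⊢
      rw [hC2dim Y hY2] at hsum ⊢
      omega
    · -- C2 vs C1
      have h1 := key2 U2 hU2 X hX2 M2
      have hsum := Submodule.finrank_sup_add_finrank_inf_eq X (rowSpace (hcat U2 M2))
      have hcomm : X ⊓ rowSpace (hcat U2 M2) = rowSpace (hcat U2 M2) ⊓ X := inf_comm _ _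
      rw [hcomm] at hsum
      unfold subspaceDist
      rw [hC1dim U2 hU2 M2] at hsum ⊢
      rw [hC2dim X hX2] at hsum ⊢
      omega
    · exact hC2dist X hX2 Y hY2 hne
end

section
/- Let q be a prime power, U ∈ F_q^{k×n1} with rank(U) = k, and M1, M2 ∈ F_q^{k×n2}. Then the subspace distance between the row spaces satisfies d_S( im(U|M1), im(U|M2) ) = 2·rank(M1 − M2). In particular, im(U|M1) = im(U|M2) if and only if M1 = M2. -/
open Module Submodule Matrix

noncomputable def appendZero (F : Type*) [Field F] (n1 n2 : ℕ) :
    (Fin n2 → F) →ₗ[F] (Fin (n1 + n2) → F) where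
  toFun v := Fin.append 0 v
  map_add' v w := funext fun i => by
    induction i using Fin.addCases <;> simp [Fin.append_left, Fin.append_right]
  map_smul' c v := funext fun i => by
    induction i using Fin.addCases <;> simp [Fin.append_left, Fin.append_right]

lemma appendZero_injective (F : Type*) [Field F] (n1 n2 : ℕ) :
    Function.Injective (appendZero F n1 n2) := by
  intro v w h
  funext j
  have := congrFun h (Fin.natAdd n1 j)
  simpa [appendZero, Fin.append_right] using this

theorem statement6 (q k n1 n2 : ℕ) (hq : IsPrimePow q)
    (F : Type) [Field F] [Fintype F] (hcard : Fintype.card F = q)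
    (U : Matrix (Fin k) (Fin n1) F) (hU : U.rank = k)
    (M1 M2 : Matrix (Fin k) (Fin n2) F) :
    subspaceDist (rowSpace (hcat U M1)) (rowSpace (hcat U M2)) = 2 * (M1 - M2).rank ∧
      (rowSpace (hcat U M1) = rowSpace (hcat U M2) ↔ M1 = M2) := by
  classical
  set D := M1 - M2 with hD
  set A1 := hcat U M1 with hA1
  set A2 := hcat U M2 with hA2
  set Z := hcat (0 : Matrix (Fin k) (Fin n1) F) D with hZ
  -- rows of U are linearly independent
  have hUind : LinearIndependent F (fun i : Fin k => U i) := by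
    rw [linearIndependent_iff_card_eq_finrank_span]
    rw [Fintype.card_fin, Set.finrank]; exact hU.symm.trans (Matrix.rank_eq_finrank_span_row U)
  -- projection of rows of A1, A2
  have hproj1 : ∀ i, proj1 F n1 n2 (A1 i) = U i := by
    intro i; funext j
    simp [proj1, LinearMap.funLeft, hA1, hcat, Fin.append_left]
  have hproj2 : ∀ i, proj1 F n1 n2 (A2 i) = U i := by
    intro i; funext j
    simp [proj1, LinearMap.funLeft, hA2, hcat, Fin.append_left]
  -- rows of A1, A2 are linearly independent
  have hA1ind : LinearIndependent F (fun i : Fin k => A1 i) :=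
    LinearIndependent.of_comp (proj1 F n1 n2) (by
      rw [show (⇑(proj1 F n1 n2) ∘ fun i : Fin k => A1 i) = fun i => U i from funext hproj1]
      exact hUind)
  have hA2ind : LinearIndependent F (fun i : Fin k => A2 i) :=
    LinearIndependent.of_comp (proj1 F n1 n2) (by
      rw [show (⇑(proj1 F n1 n2) ∘ fun i : Fin k => A2 i) = fun i => U i from funext hproj2]
      exact hUind)
  have hr1 : finrank F (rowSpace A1) = k := by
    rw [rowSpace, finrank_span_eq_card hA1ind, Fintype.card_fin]
  have hr2 : finrank F (rowSpace A2) = k := by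
    rw [rowSpace, finrank_span_eq_card hA2ind, Fintype.card_fin]
  -- Z's row space is the image of D's row space under appendZero
  have hZrow : ∀ i, Z i = appendZero F n1 n2 (D i) := by
    intro i; funext j
    induction j using Fin.addCases <;>
      simp [hZ, hcat, appendZero, Fin.append_left, Fin.append_right]
  have hZmap : rowSpace Z = Submodule.map (appendZero F n1 n2) (rowSpace D) := by
    rw [rowSpace, rowSpace, Submodule.map_span, ← Set.range_comp]
    exact congrArg (Submodule.span F) (congrArg Set.range (funext hZrow))
  have hrZ : finrank F (rowSpace Z) = D.rank := by
    rw [hZmap]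
    rw [Matrix.rank_eq_finrank_span_row]
    exact (LinearEquiv.finrank_eq
      (Submodule.equivMapOfInjective _ (appendZero_injective F n1 n2) (rowSpace D))).symm
  -- the sup equals rowSpace A1 ⊔ rowSpace Z
  have hZrowsub : ∀ i, Z i = A1 i - A2 i := by
    intro i; funext j
    induction j using Fin.addCases <;>
      simp [hZ, hA1, hA2, hD, hcat, Fin.append_left, Fin.append_right]
  have hsup : rowSpace A1 ⊔ rowSpace A2 = rowSpace A1 ⊔ rowSpace Z := by
    apply le_antisymm
    · refine sup_le le_sup_left ?_
      rw [rowSpace, Submodule.span_le]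
      rintro _ ⟨i, rfl⟩
      have h1 : A1 i ∈ rowSpace A1 ⊔ rowSpace Z :=
        Submodule.mem_sup_left (Submodule.subset_span ⟨i, rfl⟩)
      have h2 : Z i ∈ rowSpace A1 ⊔ rowSpace Z :=
        Submodule.mem_sup_right (Submodule.subset_span ⟨i, rfl⟩)
      have heq : A2 i = A1 i - Z i := by rw [hZrowsub i]; abel
      show A2 i ∈ (rowSpace A1 ⊔ rowSpace Z : Submodule F _)
      rw [heq]; exact sub_mem h1 h2
    · refine sup_le le_sup_left ?_
      rw [rowSpace, Submodule.span_le]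
      rintro _ ⟨i, rfl⟩
      have h1 : A1 i ∈ rowSpace A1 ⊔ rowSpace A2 :=
        Submodule.mem_sup_left (Submodule.subset_span ⟨i, rfl⟩)
      have h2 : A2 i ∈ rowSpace A1 ⊔ rowSpace A2 :=
        Submodule.mem_sup_right (Submodule.subset_span ⟨i, rfl⟩)
      show Z i ∈ (rowSpace A1 ⊔ rowSpace A2 : Submodule F _)
      rw [hZrowsub i]; exact sub_mem h1 h2
  -- the intersection rowSpace A1 ⊓ rowSpace Z is trivial
  have hZker : rowSpace Z ≤ LinearMap.ker (proj1 F n1 n2) := by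
    rw [rowSpace, Submodule.span_le]
    rintro _ ⟨i, rfl⟩
    simp only [SetLike.mem_coe, LinearMap.mem_ker]
    funext j
    simp [proj1, LinearMap.funLeft, hZ, hcat, Fin.append_left]
  have hinf : rowSpace A1 ⊓ rowSpace Z = ⊥ := by
    rw [eq_bot_iff]
    rintro x ⟨hx1, hx2⟩
    have hx1' : x ∈ LinearMap.range A1.vecMulLinear := by
      rw [range_vecMulLinear]; exact hx1
    obtain ⟨c, rfl⟩ := hx1'
    have hker : proj1 F n1 n2 (A1.vecMulLinear c) = 0 := hZker hx2
    have hcU : c ᵥ* U = 0 := by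
      rw [← hker]
      funext j
      simp [proj1, LinearMap.funLeft, Matrix.vecMul, dotProduct, hA1, hcat,
        Fin.append_left]
    have hc : c = 0 := by
      have := Fintype.linearIndependent_iff.mp hUind c (by
        rw [← hcU]; funext j; simp [Matrix.vecMul, dotProduct, Finset.sum_apply,
          Pi.smul_apply, smul_eq_mul])
      funext i; exact this i
    simp [hc]
  have hfin : finrank F ↥(rowSpace A1 ⊔ rowSpace A2) = k + D.rank := by
    rw [hsup]
    have := Submodule.finrank_sup_add_finrank_inf_eq (rowSpace A1) (rowSpace Z)
    rw [hinf, finrank_bot, add_zero, hr1, hrZ] at this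
    exact this
  constructor
  · rw [subspaceDist, hfin, hr1, hr2]
    omega
  · constructor
    · intro h
      have hsup' : rowSpace A1 ⊔ rowSpace A2 = rowSpace A1 := by rw [h, sup_idem]
      have : k + D.rank = k := by rw [← hfin, hsup', hr1]
      have hrank0 : D.rank = 0 := by omega
      have hD0 : D = 0 := by
        have hfin0 : finrank F (Submodule.span F (Set.range D)) = 0 := by
          exact (Matrix.rank_eq_finrank_span_row D).symm.trans hrank0
        have hbot : Submodule.span F (Set.range D) = ⊥ :=
          Submodule.finrank_eq_zero.mp hfin0
        funext i j
        have : D i ∈ Submodule.span F (Set.range D) := Submodule.subset_span ⟨i, rfl⟩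
        rw [hbot] at this
        simpa using congrFun (Submodule.mem_bot F |>.mp this) j
      exact sub_eq_zero.mp hD0
    · intro h; rw [hA1, hA2, h]
end
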